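/- arXiv:2407.11739 — 2 statements merged into one kernel-verified Lean document; each statement's English description precedes it below -/
import Mathlib

section
/- Let N be a positive integer, α > 0, δ = 1/(2Nα+1), and run N steps of gradient descent on H_δ (with L = 1) from x₀ = 1 with stepsize α. Then H_δ(x_N) - inf H_δ = 1/(2(2Nα+1)). -/
/-! At the boundary `|y| = δ` both branches of the Huber function and of its derivative agree,
so every iterate `xₖ ≥ δ` sees the constant slope `δ`. Gradient descent therefore moves by `αδ`
at each step, and `δ(2Nα + 1) = 1` places `x_N = (Nα + 1)δ` in the linear region, where
`H_δ(x_N) = δ x_N - δ²/2 = δ / 2`. -/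

noncomputable def huber (δ y : ℝ) : ℝ :=
  if |y| ≤ δ then y ^ 2 / 2 else δ * |y| - δ ^ 2 / 2

noncomputable def huberDeriv (δ y : ℝ) : ℝ :=
  if |y| ≤ δ then y else δ * Real.sign y

section Huber

variable {δ : ℝ}

theorem huber_nonneg (hδ : 0 ≤ δ) (y : ℝ) : 0 ≤ huber δ y := by
  unfold huber
  split_ifs with h
  · positivity
  · nlinarith [not_le.mp h]

theorem huber_zero (hδ : 0 ≤ δ) : huber δ 0 = 0 := by
  simp [huber, hδ]

theorem sInf_range_huber (hδ : 0 ≤ δ) : sInf (Set.range (huber δ)) = 0 :=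
  IsLeast.csInf_eq ⟨⟨0, huber_zero hδ⟩, by rintro _ ⟨y, rfl⟩; exact huber_nonneg hδ y⟩

theorem huber_of_le {y : ℝ} (hδ : 0 ≤ δ) (hy : δ ≤ y) : huber δ y = δ * y - δ ^ 2 / 2 := by
  rw [huber, abs_of_nonneg (hδ.trans hy)]
  split_ifs with h
  · rw [le_antisymm h hy]; ring
  · rfl

theorem huberDeriv_of_le {y : ℝ} (hδ : 0 ≤ δ) (hy : δ ≤ y) : huberDeriv δ y = δ := by
  rw [huberDeriv, abs_of_nonneg (hδ.trans hy)]
  split_ifs with h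
  · exact le_antisymm h hy
  · rw [Real.sign_of_pos (hδ.trans_lt (not_le.mp h)), mul_one]

end Huber

theorem iterate_eq_sub_of_deriv_eq_const {g : ℝ → ℝ} {a c α : ℝ} (hg : ∀ y, a ≤ y → g y = c)
    {x : ℕ → ℝ} (hupdate : ∀ k, x (k + 1) = x k - α * g (x k)) :
    ∀ n : ℕ, (∀ k < n, a ≤ x 0 - k * α * c) → x n = x 0 - n * α * c
  | 0, _ => by simp
  | n + 1, h => by
    have hxn := iterate_eq_sub_of_deriv_eq_const hg hupdate n fun k hk => h k (by omega)
    rw [hupdate, hg _ (hxn ▸ h n n.lt_succ_self), hxn]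
    push_cast
    ring

theorem stmt_9_general (N : ℕ) (α : ℝ) (hα : 0 < α) (δ : ℝ)
    (hδ : δ = 1 / (2 * N * α + 1))
    (H H' : ℝ → ℝ)
    (hH : ∀ y, H y = if |y| ≤ δ then y ^ 2 / 2 else δ * |y| - δ ^ 2 / 2)
    (hH' : ∀ y, H' y = if |y| ≤ δ then y else δ * Real.sign y)
    (x : ℕ → ℝ) (hx0 : x 0 = 1)
    (hupdate : ∀ k, x (k + 1) = x k - α * H' (x k)) :
    H (x N) - sInf (Set.range H) = 1 / (2 * (2 * N * α + 1)) := by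
  obtain rfl : H = huber δ := funext hH
  obtain rfl : H' = huberDeriv δ := funext hH'
  have hNα : 0 ≤ (N : ℝ) * α := by positivity
  have hδ0 : 0 < δ := by rw [hδ]; positivity
  have hδN : δ * (2 * N * α + 1) = 1 := by rw [hδ]; field_simp
  have hxN : x N = (N * α + 1) * δ := by
    have hstep := iterate_eq_sub_of_deriv_eq_const (fun _ => huberDeriv_of_le hδ0.le) hupdate N
    rw [hx0] at hstep
    rw [hstep fun k hk => ?_]
    · linear_combination -hδN
    · have hk : (k : ℝ) ≤ N := by exact_mod_cast hk.le
      nlinarith [mul_le_mul_of_nonneg_right hk (mul_nonneg hα.le hδ0.le)]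
  have hδxN : δ ≤ x N := by rw [hxN]; nlinarith
  rw [huber_of_le hδ0.le hδxN, sInf_range_huber hδ0.le, hxN, hδ]
  field_simp
  ring

theorem stmt_9 (N : ℕ) (hN : 0 < N) (α : ℝ) (hα : 0 < α) (δ : ℝ)
    (hδ : δ = 1 / (2 * N * α + 1))
    (H H' : ℝ → ℝ)
    (hH : ∀ y, H y = if |y| ≤ δ then y ^ 2 / 2 else δ * |y| - δ ^ 2 / 2)
    (hH' : ∀ y, H' y = if |y| ≤ δ then y else δ * Real.sign y)
    (x : ℕ → ℝ) (hx0 : x 0 = 1)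
    (hupdate : ∀ k, x (k + 1) = x k - α * H' (x k)) :
    H (x N) - sInf (Set.range H) = 1 / (2 * (2 * N * α + 1)) :=
  stmt_9_general N α hα δ hδ H H' hH hH' x hx0 hupdate
end

section
/- Let N ≥ 1, and suppose f : ℝⁿ → ℝ is convex and 1-smooth with minimizer x⋆ satisfying ‖x₀ - x⋆‖ ≤ 1, and x_{k+1} = x_k - α∇f(x_k) with α ∈ (0,2). Suppose nonnegative reals λ_{ij} and errors ε₀,…,ε_N satisfy the algebraic identity Σ λ_{ij} Q_{ij} = f(x⋆) - f(x_N) + r(‖x₀-x⋆‖² - ‖x₀ - (1/(2r))Σ c_i ∇f(x_i) - x⋆‖²) + Σ_{i<N} ε_i (f(x_i) - f(x⋆)) + (ε_N/2)‖∇f(x₀)‖², where Q_{ij} = f(x_i) - f(x_j) - ⟨∇f(x_j), x_i - x_j⟩ - ½‖∇f(x_i) - ∇f(x_j)‖² and r > 0. Then f(x_N) - f(x⋆) ≤ r + (1/2)·Σ_i max(ε_i, 0). -/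
open InnerProductSpace
section Aux
variable {E : Type*} [NormedAddCommGroup E] [InnerProductSpace ℝ E] [CompleteSpace E]
variable {f : E → ℝ} {g : E → E}

lemma line_hasDerivAt (hgrad : ∀ x, HasGradientAt f (g x) x) (x v : E) (t : ℝ) :
    HasDerivAt (fun s : ℝ => f (x + s • v)) (inner ℝ (g (x + t • v)) v : ℝ) t := by
  have h1 : HasFDerivAt f (toDual ℝ E (g (x + t • v))) (x + t • v) :=
    (hasGradientAt_iff_hasFDerivAt).1 (hgrad _)
  have h2 : HasDerivAt (fun s : ℝ => x + s • v) v t := by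
    simpa using (hasDerivAt_id t).smul_const v |>.const_add x
  exact h1.comp_hasDerivAt t h2

/-- Subgradient inequality. -/
lemma subgrad (hconv : ConvexOn ℝ Set.univ f) (hgrad : ∀ x, HasGradientAt f (g x) x)
    (x y : E) : f x + (inner ℝ (g x) (y - x) : ℝ) ≤ f y := by
  set v := y - x with hv
  have heq : (fun s : ℝ => f (x + s • v)) = f ∘ (AffineMap.lineMap x y) := by
    funext s
    simp [AffineMap.lineMap_apply, hv, add_comm]
  have hφ : ConvexOn ℝ Set.univ (fun s : ℝ => f (x + s • v)) := by
    rw [heq]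
    exact (hconv.comp_affineMap _).subset (by simp) convex_univ
  have hd : HasDerivAt (fun s : ℝ => f (x + s • v)) (inner ℝ (g x) v : ℝ) 0 := by
    simpa using line_hasDerivAt hgrad x v 0
  have := hφ.le_slope_of_hasDerivAt (Set.mem_univ (0:ℝ)) (Set.mem_univ (1:ℝ)) one_pos hd
  simp [slope_def_field, hv] at this
  linarith [this]

/-- Descent lemma. -/
lemma descent (hgrad : ∀ x, HasGradientAt f (g x) x)
    (hlip : ∀ x y, ‖g x - g y‖ ≤ ‖x - y‖) (x v : E) :
    f (x + v) ≤ f x + (inner ℝ (g x) v : ℝ) + ‖v‖ ^ 2 / 2 := by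
  set ψ := fun t : ℝ => f (x + t • v) - t * (inner ℝ (g x) v : ℝ) - t ^ 2 * ‖v‖ ^ 2 / 2 with hψ
  have hd : ∀ t : ℝ, HasDerivAt ψ
      ((inner ℝ (g (x + t • v)) v : ℝ) - (inner ℝ (g x) v : ℝ) - t * ‖v‖ ^ 2) t := by
    intro t
    have h1 := line_hasDerivAt hgrad x v t
    have h2 : HasDerivAt (fun t : ℝ => t * (inner ℝ (g x) v : ℝ)) (inner ℝ (g x) v : ℝ) t := by
      simpa using (hasDerivAt_id t).mul_const (inner ℝ (g x) v : ℝ)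
    have h3 : HasDerivAt (fun t : ℝ => t ^ 2 * ‖v‖ ^ 2 / 2) (t * ‖v‖ ^ 2) t := by
      have := ((hasDerivAt_pow 2 t).mul_const (‖v‖ ^ 2)).div_const 2
      simpa using this.congr_deriv (by ring)
    exact (h1.sub h2).sub h3
  have hanti : AntitoneOn ψ (Set.Icc (0:ℝ) 1) := by
    apply antitoneOn_of_deriv_nonpos (convex_Icc 0 1)
    · exact fun t _ => ((hd t).differentiableAt).continuousAt.continuousWithinAt
    · intro t ht
      exact ((hd t).differentiableAt).differentiableWithinAt
    · intro t ht
      rw [interior_Icc] at ht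
      rw [(hd t).deriv]
      have h1 : (inner ℝ (g (x + t • v)) v : ℝ) - (inner ℝ (g x) v : ℝ)
          = (inner ℝ (g (x + t • v) - g x) v : ℝ) := by
        rw [inner_sub_left]
      have h2 : (inner ℝ (g (x + t • v) - g x) v : ℝ) ≤ t * ‖v‖ ^ 2 := by
        calc (inner ℝ (g (x + t • v) - g x) v : ℝ) ≤ ‖g (x + t • v) - g x‖ * ‖v‖ :=
              real_inner_le_norm _ _
          _ ≤ ‖x + t • v - x‖ * ‖v‖ := by
              exact mul_le_mul_of_nonneg_right (hlip _ _) (norm_nonneg _)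
          _ = t * ‖v‖ ^ 2 := by
              rw [add_sub_cancel_left, norm_smul, Real.norm_eq_abs,
                abs_of_pos ht.1]; ring
      linarith
  have := hanti (Set.left_mem_Icc.2 zero_le_one) (Set.right_mem_Icc.2 zero_le_one) zero_le_one
  simp [hψ] at this
  linarith [this]


/-- Smooth convex interpolation inequality. -/
lemma interp (hconv : ConvexOn ℝ Set.univ f) (hgrad : ∀ x, HasGradientAt f (g x) x)
    (hlip : ∀ x y, ‖g x - g y‖ ≤ ‖x - y‖) (x y : E) :
    f x + (inner ℝ (g x) (y - x) : ℝ) + ‖g y - g x‖ ^ 2 / 2 ≤ f y := by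
  set d := g y - g x with hd
  have h1 : f (y + (-d)) ≤ f y + (inner ℝ (g y) (-d) : ℝ) + ‖-d‖ ^ 2 / 2 :=
    descent hgrad hlip y (-d)
  have h2 : f x + (inner ℝ (g x) ((y + (-d)) - x) : ℝ) ≤ f (y + (-d)) :=
    subgrad hconv hgrad x (y + (-d))
  have h3 : (inner ℝ (g x) ((y + (-d)) - x) : ℝ)
      = (inner ℝ (g x) (y - x) : ℝ) - (inner ℝ (g x) d : ℝ) := by
    have : (y + (-d)) - x = (y - x) - d := by abel
    rw [this, inner_sub_right]
  have h4 : (inner ℝ (g y) d : ℝ) - (inner ℝ (g x) d : ℝ) = ‖d‖ ^ 2 := by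
    rw [← inner_sub_left, ← hd, real_inner_self_eq_norm_sq]
  have h5 : ‖-d‖ ^ 2 = ‖d‖ ^ 2 := by rw [norm_neg]
  rw [inner_neg_right] at h1
  nlinarith [h1, h2]

end Aux
set_option maxHeartbeats 1000000 in
theorem stmt_14 (n N : ℕ) (hN : 1 ≤ N)
    (f : EuclideanSpace ℝ (Fin n) → ℝ)
    (g : EuclideanSpace ℝ (Fin n) → EuclideanSpace ℝ (Fin n))
    (hconv : ConvexOn ℝ Set.univ f)
    (hgrad : ∀ x, HasGradientAt f (g x) x)
    (hlip : ∀ x y, ‖g x - g y‖ ≤ ‖x - y‖)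
    (xstar : EuclideanSpace ℝ (Fin n)) (hmin : IsMinOn f Set.univ xstar)
    (x : ℕ → EuclideanSpace ℝ (Fin n)) (hx0 : ‖x 0 - xstar‖ ≤ 1)
    (α : ℝ) (hα0 : 0 < α) (hα2 : α < 2)
    (hupdate : ∀ k, x (k + 1) = x k - α • g (x k))
    (p : ℕ → EuclideanSpace ℝ (Fin n))
    (hp : ∀ i, p i = if i ≤ N then x i else xstar)
    (Q : ℕ → ℕ → ℝ)
    (hQ : ∀ i j, Q i j =
      f (p i) - f (p j) - (inner ℝ (g (p j)) (p i - p j) : ℝ) - ‖g (p i) - g (p j)‖ ^ 2 / 2)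
    (lam : ℕ → ℕ → ℝ) (hlam : ∀ i j, 0 ≤ lam i j)
    (c : ℕ → ℝ) (ε : ℕ → ℝ) (r : ℝ) (hr : 0 < r)
    (hidentity :
      ∑ i ∈ Finset.range (N + 2), ∑ j ∈ Finset.range (N + 2), lam i j * Q i j =
        f xstar - f (x N) +
          r * (‖x 0 - xstar‖ ^ 2 -
            ‖x 0 - (1 / (2 * r)) • (∑ i ∈ Finset.range (N + 1), c i • g (x i)) - xstar‖ ^ 2) +
          (∑ i ∈ Finset.range N, ε i * (f (x i) - f xstar)) +
          (ε N / 2) * ‖g (x 0)‖ ^ 2) :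
    f (x N) - f xstar ≤ r + (1 / 2) * ∑ i ∈ Finset.range (N + 1), max (ε i) 0 := by
  -- gradient vanishes at the minimizer
  have hgstar : g xstar = 0 := by
    have hloc : IsLocalMin f xstar := by
      have h := hmin
      rw [isMinOn_iff] at h
      exact Filter.Eventually.of_forall (fun y => h y (Set.mem_univ y))
    have h0 := hloc.hasFDerivAt_eq_zero
      ((hasGradientAt_iff_hasFDerivAt).1 (hgrad xstar))
    have h1 := congrArg (fun L => (toDual ℝ (EuclideanSpace ℝ (Fin n))).symm L) h0
    simpa using h1
  have hfmin : ∀ y, f xstar ≤ f y := fun y => hmin (Set.mem_univ y)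
  -- gradient bound at x 0
  have hgx0 : ‖g (x 0)‖ ^ 2 ≤ 1 := by
    have h1 : ‖g (x 0)‖ ≤ 1 := by
      have h := hlip (x 0) xstar
      rw [hgstar, sub_zero] at h
      exact h.trans hx0
    nlinarith [norm_nonneg (g (x 0))]
  -- every Q is nonnegative
  have hQ0 : ∀ i j, 0 ≤ Q i j := by
    intro i j
    rw [hQ i j]
    have h := interp hconv hgrad hlip (p j) (p i)
    have hsym : ‖g (p i) - g (p j)‖ = ‖g (p j) - g (p i)‖ := norm_sub_rev _ _
    nlinarith [h]
  -- f (x 0) - f xstar ≤ 1/2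
  have hfx0 : f (x 0) - f xstar ≤ 1 / 2 := by
    have h1 := interp hconv hgrad hlip (x 0) xstar
    rw [hgstar, zero_sub, norm_neg] at h1
    have h2 : -(‖g (x 0)‖ * ‖x 0 - xstar‖) ≤ (inner ℝ (g (x 0)) (xstar - x 0) : ℝ) := by
      have h3 := real_inner_le_norm (g (x 0)) (x 0 - xstar)
      have heq : (inner ℝ (g (x 0)) (xstar - x 0) : ℝ)
          = -(inner ℝ (g (x 0)) (x 0 - xstar) : ℝ) := by
        rw [← inner_neg_right]; congr 1; abel
      rw [heq]
      have h4 : ‖g (x 0)‖ * ‖x 0 - xstar‖ = ‖g (x 0)‖ * ‖x 0 - xstar‖ := rfl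
      linarith
    have h3 : ‖x 0 - xstar‖ ≤ 1 := hx0
    nlinarith [norm_nonneg (g (x 0)), norm_nonneg (x 0 - xstar),
      sq_nonneg (‖g (x 0)‖ - ‖x 0 - xstar‖)]
  -- descent along iterates
  have hdesc : ∀ k, f (x (k + 1)) ≤ f (x k) := by
    intro k
    have h1 := descent hgrad hlip (x k) (-(α • g (x k)))
    have heq : x k + -(α • g (x k)) = x (k + 1) := by rw [hupdate k]; abel
    rw [heq] at h1
    have h2 : (inner ℝ (g (x k)) (-(α • g (x k))) : ℝ) = -(α * ‖g (x k)‖ ^ 2) := by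
      rw [inner_neg_right, real_inner_smul_right, real_inner_self_eq_norm_sq]
    have h3 : ‖-(α • g (x k))‖ ^ 2 = α ^ 2 * ‖g (x k)‖ ^ 2 := by
      rw [norm_neg, norm_smul, Real.norm_eq_abs, mul_pow, sq_abs]
    rw [h2, h3] at h1
    nlinarith [sq_nonneg ‖g (x k)‖]
  have hfxi : ∀ i, f (x i) ≤ f (x 0) := by
    intro i
    induction i with
    | zero => exact le_refl _
    | succ k ih => exact (hdesc k).trans ih
  have hfi : ∀ i, 0 ≤ f (x i) - f xstar ∧ f (x i) - f xstar ≤ 1 / 2 := by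
    intro i
    exact ⟨by linarith [hfmin (x i)], by linarith [hfxi i]⟩
  -- LHS of the identity is nonnegative
  have hLHS : 0 ≤ ∑ i ∈ Finset.range (N + 2), ∑ j ∈ Finset.range (N + 2), lam i j * Q i j :=
    Finset.sum_nonneg fun i _ => Finset.sum_nonneg fun j _ =>
      mul_nonneg (hlam i j) (hQ0 i j)
  -- bound the quadratic term
  have hsq : r * (‖x 0 - xstar‖ ^ 2 -
      ‖x 0 - (1 / (2 * r)) • (∑ i ∈ Finset.range (N + 1), c i • g (x i)) - xstar‖ ^ 2) ≤ r := by
    have h1 : ‖x 0 - xstar‖ ^ 2 ≤ 1 := by nlinarith [norm_nonneg (x 0 - xstar)]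
    have h2 : 0 ≤ ‖x 0 - (1 / (2 * r)) • (∑ i ∈ Finset.range (N + 1), c i • g (x i)) - xstar‖ ^ 2 :=
      sq_nonneg _
    have h3 : ‖x 0 - xstar‖ ^ 2 -
        ‖x 0 - (1 / (2 * r)) • (∑ i ∈ Finset.range (N + 1), c i • g (x i)) - xstar‖ ^ 2
        ≤ 1 := by linarith
    calc r * (‖x 0 - xstar‖ ^ 2 -
        ‖x 0 - (1 / (2 * r)) • (∑ i ∈ Finset.range (N + 1), c i • g (x i)) - xstar‖ ^ 2)
        ≤ r * 1 := mul_le_mul_of_nonneg_left h3 hr.le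
      _ = r := mul_one r
  -- bound the epsilon sums
  have hS : ∑ i ∈ Finset.range N, ε i * (f (x i) - f xstar)
      ≤ ∑ i ∈ Finset.range N, max (ε i) 0 * (1 / 2) := by
    apply Finset.sum_le_sum
    intro i _
    rcases le_or_gt 0 (ε i) with h | h
    · rw [max_eq_left h]
      exact mul_le_mul_of_nonneg_left (hfi i).2 h
    · rw [max_eq_right h.le]
      have h5 := (hfi i).1
      rw [zero_mul]
      exact mul_nonpos_iff.2 (Or.inr ⟨h.le, h5⟩)
  have hT : (ε N / 2) * ‖g (x 0)‖ ^ 2 ≤ max (ε N) 0 * (1 / 2) := by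
    rcases le_or_gt 0 (ε N) with h | h
    · rw [max_eq_left h]
      have h1 : (ε N / 2) * ‖g (x 0)‖ ^ 2 ≤ (ε N / 2) * 1 :=
        mul_le_mul_of_nonneg_left hgx0 (by linarith)
      linarith
    · rw [max_eq_right h.le, zero_mul]
      exact mul_nonpos_iff.2 (Or.inr ⟨by linarith, sq_nonneg _⟩)
  rw [Finset.sum_range_succ]
  rw [hidentity] at hLHS
  have hmul : (1:ℝ) / 2 * (∑ i ∈ Finset.range N, max (ε i) 0 + max (ε N) 0)
      = ∑ i ∈ Finset.range N, max (ε i) 0 * (1 / 2) + max (ε N) 0 * (1 / 2) := by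
    rw [← Finset.sum_mul]; ring
  linarith [hS, hT, hsq, hLHS]
end
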